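/- Let Ω ⊂ ℝ² be a bounded domain with smooth boundary and φ : Ω̄ → Ω̄ a smooth diffeomorphism which is conformal with respect to the Euclidean metric (i.e. Dφ(x)ᵀ Dφ(x) = μ(x) I for some positive function μ) and satisfies φ|_{∂Ω} = Id. Then φ = Id on Ω. -/

import Mathlib

noncomputable section

/-- Dot product on `Fin 2 → ℝ`. -/
def dot2 (u v : Fin 2 → ℝ) : ℝ := ∑ i, u i * v i

open Complex Set Metric Bornology

/-- The identification of `Fin 2 → ℝ` with `ℂ`. -/
def eL : (Fin 2 → ℝ) ≃ₗ[ℝ] ℂ where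
  toFun x := x 0 + x 1 * Complex.I
  invFun z := ![z.re, z.im]
  map_add' x y := by simp [Pi.add_apply]; ring
  map_smul' c x := by simp [Pi.smul_apply, smul_eq_mul]; ring
  left_inv x := by
    funext i
    fin_cases i <;> simp
  right_inv z := by simp

def eC : (Fin 2 → ℝ) ≃L[ℝ] ℂ := eL.toContinuousLinearEquiv

lemma eC_apply (x : Fin 2 → ℝ) : eC x = x 0 + x 1 * Complex.I := rfl

lemma eC_symm_apply (z : ℂ) : eC.symm z = ![z.re, z.im] := rfl

lemma eC_re (x : Fin 2 → ℝ) : (eC x).re = x 0 := by simp [eC_apply]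

lemma eC_im (x : Fin 2 → ℝ) : (eC x).im = x 1 := by simp [eC_apply]

lemma dot2_eq (u v : Fin 2 → ℝ) :
    dot2 u v = (eC u).re * (eC v).re + (eC u).im * (eC v).im := by
  simp [dot2, Fin.sum_univ_two, eC_re, eC_im]

lemma perp_dichotomy {A B : ℂ} {μ : ℝ} (hμ : 0 < μ) (hA : Complex.normSq A = μ)
    (hB : Complex.normSq B = μ) (hAB : A.re * B.re + A.im * B.im = 0) :
    B = Complex.I * A ∨ B = -(Complex.I * A) := by
  have hAne : A ≠ 0 := by
    intro h
    rw [h, map_zero] at hA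
    exact hμ.ne hA
  have hcne : (starRingEnd ℂ) A ≠ 0 := by simpa using hAne
  set C := B * (starRingEnd ℂ) A with hC
  have hCre : C.re = 0 := by
    simp only [hC, Complex.mul_re, Complex.conj_re, Complex.conj_im]
    nlinarith [hAB]
  have hCnorm : Complex.normSq C = μ * μ := by
    simp only [hC, Complex.normSq_mul, Complex.normSq_conj, hA, hB]
  have hCim : C.im * C.im = μ * μ := by
    have := Complex.normSq_apply C
    nlinarith [hCnorm, hCre]
  have hAc : (starRingEnd ℂ) A * A = (μ : ℂ) := by
    rw [mul_comm, Complex.mul_conj, hA]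
  have hμC : (μ : ℂ) ≠ 0 := by
    simpa using hμ.ne'
  rcases mul_self_eq_mul_self_iff.mp hCim with h | h
  · left
    apply mul_right_cancel₀ hcne
    have hCeq : C = (μ : ℂ) * Complex.I := by
      apply Complex.ext <;> simp [hCre, h]
    rw [← hC, hCeq]
    rw [mul_assoc, mul_comm A, hAc]
    ring
  · right
    apply mul_right_cancel₀ hcne
    have hCeq : C = -((μ : ℂ) * Complex.I) := by
      apply Complex.ext <;> simp [hCre, h]
    rw [← hC, hCeq]
    rw [neg_mul, mul_assoc, mul_comm A, hAc]
    ring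

lemma hasDerivAt_of_conformal {f : ℂ → ℂ} {z A : ℂ} {L : ℂ →L[ℝ] ℂ}
    (h : HasFDerivAt f L z) (h1 : L 1 = A) (hI : L Complex.I = Complex.I * A) :
    HasDerivAt f A z := by
  rw [hasDerivAt_iff_hasFDerivAt]
  refine hasFDerivAt_of_restrictScalars ℝ h ?_
  apply ContinuousLinearMap.ext
  intro w
  have hw : w = (w.re : ℝ) • (1 : ℂ) + (w.im : ℝ) • Complex.I := by
    simp [Complex.real_smul, Complex.re_add_im]
  rw [ContinuousLinearMap.coe_restrictScalars', hw]
  simp only [map_add, map_smul, h1, hI]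
  simp [Complex.real_smul]
  ring

lemma not_frontier_subset_line {U : Set ℂ} (hne : U.Nonempty) (hUb : IsBounded U)
    (hUo : IsOpen U) {r : ℝ} (hfr : ∀ z ∈ frontier U, z.re = r) : False := by
  obtain ⟨p₀, hp₀⟩ := hne
  obtain ⟨δ, hδ, hball⟩ := Metric.isOpen_iff.mp hUo p₀ hp₀
  obtain ⟨p, hp, hpr⟩ : ∃ p ∈ U, p.re ≠ r := by
    by_cases h : p₀.re = r
    · refine ⟨p₀ + (δ/2 : ℝ), hball ?_, ?_⟩
      · rw [mem_ball]
        simp only [dist_eq, add_sub_cancel_left]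
        rw [Complex.norm_real, Real.norm_eq_abs]
        rw [abs_of_pos (by linarith)]
        linarith
      · simp [h]
        linarith
    · exact ⟨p₀, hp₀, h⟩
  set d : ℝ := if r < p.re then 1 else -1 with hd
  have hdabs : |d| = 1 := by
    rcases le_or_gt p.re r with h | h
    · rw [hd, if_neg (not_lt.mpr h)]; simp
    · rw [hd, if_pos h]; simp
  set f : ℝ → ℂ := fun t => p + (t * d : ℝ) with hf
  have hfre : ∀ t : ℝ, (f t).re = p.re + t * d := by intro t; simp [hf]
  have hside : ∀ t : ℝ, 0 ≤ t → (f t).re ≠ r := by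
    intro t ht
    rw [hfre]
    rcases lt_or_ge r p.re with h | h
    · rw [hd, if_pos h]; intro hc; nlinarith
    · have h' : p.re < r := lt_of_le_of_ne h hpr
      rw [hd, if_neg (not_lt.mpr h)]; intro hc; nlinarith
  set S : Set ℝ := {t | 0 ≤ t ∧ f t ∈ closure U} with hS
  have hS0 : (0 : ℝ) ∈ S := by
    refine ⟨le_refl _, ?_⟩
    have : f 0 = p := by simp [hf]
    rw [this]
    exact subset_closure hp
  obtain ⟨R, hR⟩ := hUb.closure.subset_ball 0
  have hbdd : BddAbove S := by
    refine ⟨R + ‖p‖, fun t ht => ?_⟩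
    have h1 : ‖f t‖ < R := by
      have := hR ht.2
      rwa [mem_ball, dist_zero_right] at this
    have h2 : ‖f t - p‖ ≤ ‖f t‖ + ‖p‖ := norm_sub_le _ _
    have h3 : ‖f t - p‖ = t := by
      have hft : f t - p = ((t * d : ℝ) : ℂ) := by simp [hf]
      rw [hft, Complex.norm_real, Real.norm_eq_abs, abs_mul, hdabs, mul_one, _root_.abs_of_nonneg ht.1]
    linarith
  set T := sSup S with hT
  have hfcont : Continuous f := by
    apply Continuous.add continuous_const
    exact Complex.continuous_ofReal.comp (continuous_id.mul continuous_const)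
  have hScl : IsClosed S := by
    have : S = Set.Ici (0:ℝ) ∩ f ⁻¹' (closure U) := by
      ext t; simp [hS, Set.mem_Ici, and_comm]
    rw [this]
    exact isClosed_Ici.inter (isClosed_closure.preimage hfcont)
  have hTS : T ∈ S := hScl.csSup_mem ⟨0, hS0⟩ hbdd
  have hfront : f T ∈ frontier U := by
    refine ⟨hTS.2, ?_⟩
    intro hint
    rw [hUo.interior_eq] at hint
    obtain ⟨ρ, hρ, hballρ⟩ := Metric.isOpen_iff.mp hUo _ hint
    have hmem : T + ρ/2 ∈ S := by
      refine ⟨by linarith [hTS.1], subset_closure (hballρ ?_)⟩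
      rw [mem_ball]
      have : f (T + ρ/2) - f T = ((ρ/2 * d : ℝ) : ℂ) := by
        rw [hf]; push_cast; ring
      rw [dist_eq, this, Complex.norm_real, Real.norm_eq_abs, abs_mul, hdabs, mul_one,
        _root_.abs_of_pos (by linarith)]
      linarith
    have := le_csSup hbdd hmem
    linarith
  exact hside T hTS.1 (hfr _ hfront)

/-- Liouville-type rigidity: a conformal self-diffeomorphism of a bounded planar
domain fixing the boundary pointwise is the identity. -/
theorem stmt9 (Ω : Set (Fin 2 → ℝ)) (hΩopen : IsOpen Ω) (hΩconn : IsConnected Ω)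
    (hΩbdd : Bornology.IsBounded Ω) (hΩne : Ω.Nonempty)
    (φ : (Fin 2 → ℝ) → (Fin 2 → ℝ))
    (hsmooth : ContDiffOn ℝ (⊤ : ℕ∞) φ (closure Ω))
    (hbij : Set.BijOn φ (closure Ω) (closure Ω))
    (hconf : ∀ x ∈ Ω, ∃ μ : ℝ, 0 < μ ∧ ∀ u v : Fin 2 → ℝ,
      dot2 (fderiv ℝ φ x u) (fderiv ℝ φ x v) = μ * dot2 u v)
    (hbdry : ∀ x ∈ frontier Ω, φ x = x) :
    ∀ x ∈ Ω, φ x = x := by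
  classical
  set U : Set ℂ := eC '' Ω with hUdef
  have hUeq : U = eC.symm ⁻¹' Ω := eC.image_eq_preimage_symm Ω
  have hUo : IsOpen U := by rw [hUeq]; exact hΩopen.preimage eC.symm.continuous
  have hUb : IsBounded U :=
    ((eC : (Fin 2 → ℝ) →L[ℝ] ℂ).lipschitz).isBounded_image hΩbdd
  have hUne : U.Nonempty := hΩne.image _
  have hUconn : IsPreconnected U :=
    (hΩconn.image _ eC.continuous.continuousOn).isPreconnected
  have hUcl : closure U = eC '' closure Ω := (eC.image_closure Ω).symm
  have hUfr : frontier U = eC '' frontier Ω := (eC.toHomeomorph.image_frontier Ω).symm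
  have hmemU : ∀ z ∈ U, eC.symm z ∈ Ω := by
    intro z hz; rw [hUeq] at hz; exact hz
  -- the transported map
  set ψ : ℂ → ℂ := fun z => eC (φ (eC.symm z)) with hψdef
  have hψx : ∀ x : Fin 2 → ℝ, ψ (eC x) = eC (φ x) := by
    intro x; simp [hψdef]
  -- differentiability of φ at interior points
  have hDφ : ∀ x ∈ Ω, HasFDerivAt φ (fderiv ℝ φ x) x := by
    intro x hx
    have hnhds : closure Ω ∈ nhds x :=
      Filter.mem_of_superset (hΩopen.mem_nhds hx) subset_closure
    exact ((hsmooth.contDiffAt hnhds).differentiableAt (by simp)).hasFDerivAt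
  -- the real derivative of ψ
  set L : ℂ → (ℂ →L[ℝ] ℂ) := fun z =>
    ((eC : (Fin 2 → ℝ) →L[ℝ] ℂ).comp
      ((fderiv ℝ φ (eC.symm z)).comp (eC.symm : ℂ →L[ℝ] (Fin 2 → ℝ)))) with hLdef
  have hψd : ∀ z ∈ U, HasFDerivAt ψ (L z) z := by
    intro z hz
    have h1 := hDφ _ (hmemU z hz)
    have h2 := h1.comp z eC.symm.hasFDerivAt
    have h3 := eC.hasFDerivAt.comp z h2
    exact h3
  have hsymm1 : eC.symm 1 = ![(1:ℝ), 0] := by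
    rw [eC_symm_apply]; norm_num
  have hsymmI : eC.symm Complex.I = ![(0:ℝ), 1] := by
    rw [eC_symm_apply]; norm_num
  set A : ℂ → ℂ := fun z => eC (fderiv ℝ φ (eC.symm z) ![1, 0]) with hAdef
  set B : ℂ → ℂ := fun z => eC (fderiv ℝ φ (eC.symm z) ![0, 1]) with hBdef
  have hL1 : ∀ z, L z 1 = A z := by
    intro z; simp [hLdef, hAdef, hsymm1]
  have hLI : ∀ z, L z Complex.I = B z := by
    intro z; simp [hLdef, hBdef, hsymmI]
  -- pointwise dichotomy
  have hkey : ∀ z ∈ U, A z ≠ 0 ∧ (B z = Complex.I * A z ∨ B z = -(Complex.I * A z)) := by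
    intro z hz
    obtain ⟨μ, hμ, hdot⟩ := hconf _ (hmemU z hz)
    set a := fderiv ℝ φ (eC.symm z) ![(1:ℝ), 0] with ha
    set b := fderiv ℝ φ (eC.symm z) ![(0:ℝ), 1] with hb
    have e11 : dot2 ![(1:ℝ), 0] ![(1:ℝ), 0] = 1 := by
      simp [dot2, Fin.sum_univ_two]
    have e22 : dot2 ![(0:ℝ), 1] ![(0:ℝ), 1] = 1 := by
      simp [dot2, Fin.sum_univ_two]
    have e12 : dot2 ![(1:ℝ), 0] ![(0:ℝ), 1] = 0 := by
      simp [dot2, Fin.sum_univ_two]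
    have hAA : Complex.normSq (A z) = μ := by
      have := hdot ![(1:ℝ), 0] ![(1:ℝ), 0]
      rw [e11, mul_one] at this
      rw [hAdef]
      rw [Complex.normSq_apply, ← dot2_eq]
      exact this
    have hBB : Complex.normSq (B z) = μ := by
      have := hdot ![(0:ℝ), 1] ![(0:ℝ), 1]
      rw [e22, mul_one] at this
      rw [hBdef]
      rw [Complex.normSq_apply, ← dot2_eq]
      exact this
    have hAB : (A z).re * (B z).re + (A z).im * (B z).im = 0 := by
      have := hdot ![(1:ℝ), 0] ![(0:ℝ), 1]
      rw [e12, mul_zero] at this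
      rw [hAdef, hBdef, ← dot2_eq]
      exact this
    refine ⟨?_, perp_dichotomy hμ hAA hBB hAB⟩
    intro h0
    rw [h0, map_zero] at hAA
    exact hμ.ne hAA
  -- continuity of A and B on U
  have hmaps : Set.MapsTo (⇑eC.symm) U Ω := fun z hz => hmemU z hz
  have hDcont : ContinuousOn (fderiv ℝ φ) Ω :=
    (hsmooth.mono subset_closure).continuousOn_fderiv_of_isOpen hΩopen (by simp)
  have hAcont : ContinuousOn A U := by
    apply eC.continuous.comp_continuousOn
    exact (hDcont.comp eC.symm.continuous.continuousOn hmaps).clm_apply continuousOn_const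
  have hBcont : ContinuousOn B U := by
    apply eC.continuous.comp_continuousOn
    exact (hDcont.comp eC.symm.continuous.continuousOn hmaps).clm_apply continuousOn_const
  -- global dichotomy via connectedness
  have hTcont : ContinuousOn (fun z => B z / A z) U :=
    hBcont.div hAcont fun z hz => (hkey z hz).1
  have himg : IsPreconnected ((fun z => B z / A z) '' U) := hUconn.image _ hTcont
  have hval : ∀ z ∈ U, B z / A z = Complex.I ∨ B z / A z = -Complex.I := by
    intro z hz
    rcases (hkey z hz).2 with h | h
    · left; rw [h]; field_simp [(hkey z hz).1]
    · right; rw [h]; field_simp [(hkey z hz).1]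
  have hdisj : Disjoint (ball (Complex.I) (1/2)) (ball (-Complex.I) (1/2)) := by
    apply ball_disjoint_ball
    rw [dist_eq]
    have : Complex.I - -Complex.I = 2 * Complex.I := by ring
    rw [this]
    simp
    norm_num
  have hsub : (fun z => B z / A z) '' U ⊆ ball (Complex.I) (1/2) ∪ ball (-Complex.I) (1/2) := by
    rintro w ⟨z, hz, rfl⟩
    rcases hval z hz with h | h
    · left; show B z / A z ∈ _; rw [h]; exact mem_ball_self (by norm_num)
    · right; show B z / A z ∈ _; rw [h]; exact mem_ball_self (by norm_num)
  have hdich : (∀ z ∈ U, B z = Complex.I * A z) ∨ (∀ z ∈ U, B z = -(Complex.I * A z)) := by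
    rcases himg.subset_or_subset isOpen_ball isOpen_ball hdisj hsub with h | h
    · left
      intro z hz
      have hA := (hkey z hz).1
      have h1 : B z / A z ∈ ball (Complex.I) (1/2) := h ⟨z, hz, rfl⟩
      rcases hval z hz with h2 | h2
      · rwa [div_eq_iff hA] at h2
      · exfalso
        rw [h2, mem_ball, dist_eq] at h1
        have e : ‖-Complex.I - Complex.I‖ = 2 := by
          have e2 : -Complex.I - Complex.I = -(2 * Complex.I) := by ring
          rw [e2]; simp
        rw [e] at h1
        norm_num at h1
    · right
      intro z hz
      have hA := (hkey z hz).1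
      have h1 : B z / A z ∈ ball (-Complex.I) (1/2) := h ⟨z, hz, rfl⟩
      rcases hval z hz with h2 | h2
      · exfalso
        rw [h2, mem_ball, dist_eq] at h1
        have e : ‖Complex.I - -Complex.I‖ = 2 := by
          have e2 : Complex.I - -Complex.I = 2 * Complex.I := by ring
          rw [e2]; simp
        rw [e] at h1
        norm_num at h1
      · rw [div_eq_iff hA] at h2
        rw [h2]; ring
  -- continuity of ψ on the closure
  have hclmaps : Set.MapsTo (⇑eC.symm) (closure U) (closure Ω) := by
    intro z hz
    rw [hUcl] at hz
    obtain ⟨x, hx, rfl⟩ := hz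
    rwa [eC.symm_apply_apply]
  have hψcont : ContinuousOn ψ (closure U) := by
    apply eC.continuous.comp_continuousOn
    exact hsmooth.continuousOn.comp eC.symm.continuous.continuousOn hclmaps
  -- boundary values of ψ
  have hψfr : ∀ z ∈ frontier U, ψ z = z := by
    intro z hz
    rw [hUfr] at hz
    obtain ⟨x, hx, rfl⟩ := hz
    rw [hψx, hbdry x hx]
  rcases hdich with hpos | hneg
  · -- holomorphic case
    have hψdiff : DifferentiableOn ℂ ψ U := by
      intro z hz
      exact (hasDerivAt_of_conformal (hψd z hz) (hL1 z)
        (by rw [hLI z, hpos z hz])).differentiableAt.differentiableWithinAt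
    have heq : Set.EqOn ψ id U :=
      Complex.eqOn_of_eqOn_frontier hUb ⟨hψdiff, hψcont⟩
        differentiable_id.diffContOnCl hψfr
    intro x hx
    have h1 : ψ (eC x) = eC x := heq ⟨x, hx, rfl⟩
    rw [hψx] at h1
    exact eC.injective h1
  · -- antiholomorphic case : derive a contradiction
    exfalso
    set g : ℂ → ℂ := fun z => (starRingEnd ℂ) (ψ z) + z with hgdef
    have hgd : ∀ z ∈ U, HasDerivAt g ((starRingEnd ℂ) (A z) + 1) z := by
      intro z hz
      have h1 : HasFDerivAt (fun w => (starRingEnd ℂ) (ψ w))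
          ((Complex.conjCLE : ℂ →L[ℝ] ℂ).comp (L z)) z := by
        have := Complex.conjCLE.hasFDerivAt.comp z (hψd z hz)
        exact this
      have h2 : HasDerivAt (fun w => (starRingEnd ℂ) (ψ w)) ((starRingEnd ℂ) (A z)) z := by
        apply hasDerivAt_of_conformal h1
        · simp [hL1 z]
        · simp only [ContinuousLinearMap.coe_comp', Function.comp_apply,
            ContinuousLinearEquiv.coe_coe, Complex.conjCLE_apply]
          rw [hLI z, hneg z hz]
          simp [map_mul]
      exact h2.add (hasDerivAt_id z)
    have hgdiff : DifferentiableOn ℂ g U := fun z hz =>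
      (hgd z hz).differentiableAt.differentiableWithinAt
    have hgcont : ContinuousOn g (closure U) := by
      apply ContinuousOn.add _ continuousOn_id
      exact Complex.continuous_conj.comp_continuousOn hψcont
    have hgfr : ∀ z ∈ frontier U, g z = ((2 * z.re : ℝ) : ℂ) := by
      intro z hz
      rw [hgdef]
      simp only []
      rw [hψfr z hz]
      rw [add_comm, Complex.add_conj]
    -- imaginary part of g vanishes on U
    have hgim : ∀ z ∈ U, (g z).im = 0 := by
      have hb1 : ∀ z ∈ closure U, ‖Complex.exp (Complex.I * g z)‖ ≤ 1 := by
        intro z hz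
        apply Complex.norm_le_of_forall_mem_frontier_norm_le hUb _ _ hz
        · refine ⟨fun w hw => ?_, ?_⟩
          · exact ((((hgd w hw).differentiableAt.const_mul
              Complex.I).cexp).differentiableWithinAt)
          · exact Complex.continuous_exp.comp_continuousOn
              (continuousOn_const.mul hgcont)
        · intro w hw
          rw [Complex.norm_exp]
          have : (Complex.I * g w).re = 0 := by
            rw [hgfr w hw]
            simp
          rw [this, Real.exp_zero]
      have hb2 : ∀ z ∈ closure U, ‖Complex.exp (-Complex.I * g z)‖ ≤ 1 := by
        intro z hz
        apply Complex.norm_le_of_forall_mem_frontier_norm_le hUb _ _ hz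
        · refine ⟨fun w hw => ?_, ?_⟩
          · exact ((((hgd w hw).differentiableAt.const_mul
              (-Complex.I)).cexp).differentiableWithinAt)
          · exact Complex.continuous_exp.comp_continuousOn
              (continuousOn_const.mul hgcont)
        · intro w hw
          rw [Complex.norm_exp]
          have : (-Complex.I * g w).re = 0 := by
            rw [hgfr w hw]
            simp
          rw [this, Real.exp_zero]
      intro z hz
      have h1 := hb1 z (subset_closure hz)
      have h2 := hb2 z (subset_closure hz)
      rw [Complex.norm_exp] at h1 h2
      have e1 : (Complex.I * g z).re = -(g z).im := by simp
      have e2 : (-Complex.I * g z).re = (g z).im := by simp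
      rw [e1] at h1
      rw [e2] at h2
      have h1' := Real.exp_le_one_iff.mp h1
      have h2' := Real.exp_le_one_iff.mp h2
      linarith
    -- open mapping theorem
    have hganal : AnalyticOnNhd ℂ g U := hgdiff.analyticOnNhd hUo
    rcases hganal.is_constant_or_isOpen hUconn with ⟨w, hw⟩ | hopen
    · -- g constant: frontier lies on a vertical line
      apply not_frontier_subset_line hUne hUb hUo (r := w.re / 2)
      intro z hz
      have hzcl : z ∈ closure U := frontier_subset_closure hz
      haveI : (nhdsWithin z U).NeBot := mem_closure_iff_nhdsWithin_neBot.mp hzcl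
      have hten : Filter.Tendsto g (nhdsWithin z U) (nhds (g z)) :=
        (hgcont z hzcl).mono subset_closure
      have hten2 : Filter.Tendsto g (nhdsWithin z U) (nhds w) := by
        apply Filter.Tendsto.congr' _ tendsto_const_nhds
        filter_upwards [self_mem_nhdsWithin] with y hy
        exact (hw y hy).symm
      have hgzw : g z = w := tendsto_nhds_unique hten hten2
      have h2 : ((2 * z.re : ℝ) : ℂ) = w := by rw [← hgfr z hz, hgzw]
      have h3 : 2 * z.re = w.re := by
        rw [← h2]; simp
      linarith
    · -- g open: but its image lies on the real axis
      have hop : IsOpen (g '' U) := hopen U (subset_refl _) hUo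
      obtain ⟨z₀, hz₀⟩ := hUne
      obtain ⟨ε, hε, hball⟩ := Metric.isOpen_iff.mp hop (g z₀) ⟨z₀, hz₀, rfl⟩
      have hmem : g z₀ + ((ε/2 : ℝ) : ℂ) * Complex.I ∈ g '' U := by
        apply hball
        rw [mem_ball, dist_eq]
        have : g z₀ + ((ε/2 : ℝ) : ℂ) * Complex.I - g z₀ = ((ε/2 : ℝ) : ℂ) * Complex.I := by
          ring
        rw [this]
        simp [Complex.norm_real]
        rw [abs_of_pos (by linarith)]
        linarith
      obtain ⟨y, hy, hyeq⟩ := hmem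
      have h1 : (g y).im = 0 := hgim y hy
      have h2 : (g y).im = (g z₀).im + ε/2 := by
        rw [hyeq]; simp
      have h3 : (g z₀).im = 0 := hgim z₀ hz₀
      linarith
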